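/- Every unitary matrix U ∈ ℂ^{n×n} can be factorized as U = R_{n−1} R_{n−2} ⋯ R_1 D, where each R_i ∈ ℂ^{n×n} is a unitary upper Hessenberg matrix (1-upper Hessenberg) and D ∈ ℂ^{n×n} is a diagonal unitary (phase) matrix. -/

import Mathlib

/-!
Induction on the size. For a unitary `U` of size `m + 1`, a QR decomposition of the `m × m`
block of `U` below its first row and left of its last column gives a unitary `W` for which
`(1 ⊕ W) U` is upper Hessenberg, so `U = (1 ⊕ V) R` with `R` unitary upper Hessenberg and `V`
unitary of size `m`. Factor `V` by induction and lift each factor along `V ↦ 1 ⊕ V`, which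
preserves being unitary and upper Hessenberg. The phase of `V` is absorbed into `R`, as a phase
times an upper Hessenberg matrix is upper Hessenberg; only in size `1` is a nontrivial phase left.
-/

open Matrix

/-- A matrix is upper Hessenberg if its entries vanish below the first subdiagonal. -/
def IsUpperHessenberg {m : ℕ} (R : Matrix (Fin m) (Fin m) ℂ) : Prop :=
  ∀ i j : Fin m, (j : ℕ) + 1 < (i : ℕ) → R i j = 0

namespace Matrix

theorem diagonal_mem_unitaryGroup_iff {𝕜 n : Type*} [RCLike 𝕜] [Fintype n] [DecidableEq n]
    {d : n → 𝕜} : diagonal d ∈ unitaryGroup n 𝕜 ↔ ∀ i, ‖d i‖ = 1 := by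
  rw [mem_unitaryGroup_iff', star_eq_conjTranspose, diagonal_conjTranspose,
    diagonal_mul_diagonal, ← diagonal_one, diagonal_eq_diagonal_iff]
  refine forall_congr' fun i => ?_
  rw [Pi.star_apply, RCLike.star_def, RCLike.conj_mul, ← pow_eq_one_iff_of_nonneg (norm_nonneg _)
    two_ne_zero]
  norm_cast

/-- The QR decomposition, in the form `Qᴴ B = T`: Gram–Schmidt applied to the columns of `B`. -/
theorem exists_mem_unitaryGroup_mul_isUpperTriangular {𝕜 ι : Type*} [RCLike 𝕜] [LinearOrder ι]
    [LocallyFiniteOrderBot ι] [Fintype ι] [DecidableEq ι] (B : Matrix ι ι 𝕜) :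
    ∃ W ∈ unitaryGroup ι 𝕜, (W * B).IsUpperTriangular := by
  let col : ι → EuclideanSpace 𝕜 ι := fun j => WithLp.toLp 2 fun i => B i j
  let e := EuclideanSpace.basisFun ι 𝕜
  let u := InnerProductSpace.gramSchmidtOrthonormalBasis finrank_euclideanSpace col
  have hQ := e.toMatrix_orthonormalBasis_mem_unitary u
  have hB : B = e.toBasis.toMatrix u * u.toBasis.toMatrix col := by
    rw [← u.coe_toBasis, Module.Basis.toMatrix_mul_toMatrix]
    rfl
  refine ⟨star (e.toBasis.toMatrix u), Unitary.star_mem hQ, ?_⟩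
  rw [hB, ← mul_assoc, Unitary.star_mul_self_of_mem hQ, one_mul]
  exact InnerProductSpace.gramSchmidtOrthonormalBasis_inv_isUpperTriangular _ _

variable {R : Type*} {m : ℕ}

/-- The block-diagonal matrix `1 ⊕ V`. -/
def oneDirectSum [Zero R] [One R] (V : Matrix (Fin m) (Fin m) R) :
    Matrix (Fin (m + 1)) (Fin (m + 1)) R :=
  of (Fin.cons (Fin.cons 1 0) fun i => Fin.cons 0 (V i))

section Entries

variable [Zero R] [One R] (V : Matrix (Fin m) (Fin m) R) (i j : Fin m)

@[simp] theorem oneDirectSum_zero_zero : oneDirectSum V 0 0 = 1 := rfl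

@[simp] theorem oneDirectSum_zero_succ : oneDirectSum V 0 j.succ = 0 := rfl

@[simp] theorem oneDirectSum_succ_zero : oneDirectSum V i.succ 0 = 0 := rfl

@[simp] theorem oneDirectSum_succ_succ : oneDirectSum V i.succ j.succ = V i j := rfl

end Entries

theorem oneDirectSum_one [Zero R] [One R] : oneDirectSum (1 : Matrix (Fin m) (Fin m) R) = 1 := by
  ext i j
  cases i using Fin.cases <;> cases j using Fin.cases <;>
    simp [one_apply, Ne.symm (Fin.succ_ne_zero _)]

theorem oneDirectSum_mul [Semiring R] (V W : Matrix (Fin m) (Fin m) R) :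
    oneDirectSum (V * W) = oneDirectSum V * oneDirectSum W := by
  ext i j
  cases i using Fin.cases <;> cases j using Fin.cases <;> simp [mul_apply, Fin.sum_univ_succ]

theorem oneDirectSum_list_prod [Semiring R] (l : List (Matrix (Fin m) (Fin m) R)) :
    oneDirectSum l.prod = (l.map oneDirectSum).prod := by
  induction l with
  | nil => exact oneDirectSum_one
  | cons V l ih => rw [List.prod_cons, oneDirectSum_mul, ih, List.map_cons, List.prod_cons]

theorem conjTranspose_oneDirectSum [Semiring R] [StarRing R] (V : Matrix (Fin m) (Fin m) R) :
    (oneDirectSum V)ᴴ = oneDirectSum Vᴴ := by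
  ext i j
  cases i using Fin.cases <;> cases j using Fin.cases <;> simp

theorem oneDirectSum_mem_unitaryGroup [CommRing R] [StarRing R] {V : Matrix (Fin m) (Fin m) R}
    (hV : V ∈ unitaryGroup (Fin m) R) : oneDirectSum V ∈ unitaryGroup (Fin (m + 1)) R := by
  rw [mem_unitaryGroup_iff, star_eq_conjTranspose, conjTranspose_oneDirectSum, ← oneDirectSum_mul,
    ← star_eq_conjTranspose, mem_unitaryGroup_iff.mp hV, oneDirectSum_one]

theorem oneDirectSum_diagonal [Zero R] [One R] (d : Fin m → R) :
    oneDirectSum (diagonal d) = diagonal (Fin.cons 1 d) := by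
  ext i j
  cases i using Fin.cases <;> cases j using Fin.cases <;>
    simp [diagonal_apply, Ne.symm (Fin.succ_ne_zero _)]

end Matrix

theorem isUpperHessenberg_oneDirectSum {m : ℕ} {V : Matrix (Fin m) (Fin m) ℂ}
    (hV : IsUpperHessenberg V) : IsUpperHessenberg (oneDirectSum V) := by
  intro i j hij
  cases i using Fin.cases with
  | zero => simp at hij
  | succ i =>
    cases j using Fin.cases with
    | zero => rfl
    | succ j => exact hV i j (by simpa using hij)

theorem IsUpperHessenberg.diagonal_mul {m : ℕ} {R : Matrix (Fin m) (Fin m) ℂ}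
    (hR : IsUpperHessenberg R) (d : Fin m → ℂ) : IsUpperHessenberg (diagonal d * R) := by
  intro i j hij
  rw [Matrix.diagonal_mul, hR i j hij, mul_zero]

theorem exists_oneDirectSum_mul_isUpperHessenberg {m : ℕ}
    {U : Matrix (Fin (m + 1)) (Fin (m + 1)) ℂ}
    (hU : U ∈ unitaryGroup (Fin (m + 1)) ℂ) :
    ∃ V ∈ unitaryGroup (Fin m) ℂ, ∃ R ∈ unitaryGroup (Fin (m + 1)) ℂ,
      IsUpperHessenberg R ∧ U = oneDirectSum V * R := by
  obtain ⟨W, hW, hWB⟩ :=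
    exists_mem_unitaryGroup_mul_isUpperTriangular (of fun i j : Fin m => U i.succ j.castSucc)
  refine ⟨star W, Unitary.star_mem hW, oneDirectSum W * U,
    Submonoid.mul_mem _ (oneDirectSum_mem_unitaryGroup hW) hU, ?_, ?_⟩
  · intro i j hij
    cases i using Fin.cases with
    | zero => simp at hij
    | succ i =>
      have hji : (j : ℕ) < i := by simpa using hij
      have hj : j ≠ Fin.last m := Fin.ne_of_lt (by rw [Fin.lt_def, Fin.val_last]; omega)
      obtain ⟨j, rfl⟩ := Fin.exists_castSucc_eq.mpr hj
      simpa [mul_apply, Fin.sum_univ_succ] using hWB (Fin.lt_def.mpr hji)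
  · rw [← mul_assoc, ← oneDirectSum_mul, Unitary.star_mul_self_of_mem hW, oneDirectSum_one,
      one_mul]

theorem unitary_succ_eq_prod_upperHessenberg_mul_phase :
    ∀ {m : ℕ} {U : Matrix (Fin (m + 1)) (Fin (m + 1)) ℂ}, U ∈ unitaryGroup (Fin (m + 1)) ℂ →
    ∃ (R : Fin m → Matrix (Fin (m + 1)) (Fin (m + 1)) ℂ) (d : Fin (m + 1) → ℂ),
      (∀ i, R i ∈ unitaryGroup (Fin (m + 1)) ℂ ∧ IsUpperHessenberg (R i)) ∧
      (∀ i, ‖d i‖ = 1) ∧ U = (List.ofFn R).prod * diagonal d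
  | 0, U, hU => by
    have hUd : U = diagonal fun i => U i i := by
      ext i j
      fin_cases i; fin_cases j
      rfl
    exact ⟨finZeroElim, _, finZeroElim, diagonal_mem_unitaryGroup_iff.mp (hUd ▸ hU),
      by simpa using hUd⟩
  | m + 1, U, hU => by
    obtain ⟨V, hV, R₀, hR₀, hR₀H, rfl⟩ := exists_oneDirectSum_mul_isUpperHessenberg hU
    obtain ⟨S, d, hS, hd, rfl⟩ := unitary_succ_eq_prod_upperHessenberg_mul_phase hV
    obtain ⟨R, hlast, hcast⟩ : ∃ R : Fin (m + 1) → Matrix (Fin (m + 2)) (Fin (m + 2)) ℂ,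
        R (Fin.last m) = oneDirectSum (diagonal d) * R₀ ∧
          ∀ i, R i.castSucc = oneDirectSum (S i) :=
      ⟨Fin.snoc _ _, Fin.snoc_last .., fun i => Fin.snoc_castSucc ..⟩
    have hR : ∀ i, R i ∈ unitaryGroup (Fin (m + 2)) ℂ ∧ IsUpperHessenberg (R i) := by
      refine Fin.lastCases ?_ fun i => ?_
      · rw [hlast, oneDirectSum_diagonal]
        have hphase : diagonal (Fin.cons 1 d) ∈ unitaryGroup (Fin (m + 2)) ℂ :=
          diagonal_mem_unitaryGroup_iff.mpr (Fin.cases (by simp) hd)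
        exact ⟨Submonoid.mul_mem _ hphase hR₀, hR₀H.diagonal_mul _⟩
      · rw [hcast]
        exact ⟨oneDirectSum_mem_unitaryGroup (hS i).1, isUpperHessenberg_oneDirectSum (hS i).2⟩
    refine ⟨R, fun _ => 1, hR, fun _ => norm_one, ?_⟩
    rw [List.ofFn_succ', List.prod_concat, hlast, funext hcast, diagonal_one, mul_one,
      oneDirectSum_mul, oneDirectSum_list_prod, List.map_ofFn, mul_assoc]
    rfl

theorem unitary_eq_prod_upperHessenberg_mul_phase {n : ℕ}
    (U : Matrix (Fin n) (Fin n) ℂ) (hU : U ∈ Matrix.unitaryGroup (Fin n) ℂ) :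
    ∃ (R : Fin (n - 1) → Matrix (Fin n) (Fin n) ℂ) (d : Fin n → ℂ),
      (∀ i, R i ∈ Matrix.unitaryGroup (Fin n) ℂ ∧ IsUpperHessenberg (R i)) ∧
      (∀ i, ‖d i‖ = 1) ∧
      U = (List.ofFn R).prod * Matrix.diagonal d := by
  cases n with
  | zero => exact ⟨finZeroElim, finZeroElim, finZeroElim, finZeroElim, Subsingleton.elim _ _⟩
  | succ m => exact unitary_succ_eq_prod_upperHessenberg_mul_phase hU
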